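/- If α ≥ β ≥ 1/2, then the function f_{α,β,-1}(x) = x^{x+β-α} / (e^x Γ(x+β)) is (strictly) decreasing on (0,∞); equivalently, for all y > x > 0 one has e^y Γ(y+β)/y^{y+β−α} > e^x Γ(x+β)/x^{x+β−α}. -/

import Mathlib

/-!
Write `ψ = (log ∘ Γ)'`. The logarithm of `x ^ (x + β - α) / (eˣ Γ(x + β))` has derivative
`log x + (β - α) / x - ψ(x + β)`, and `ψ(x + β) ≥ ψ(x + 1/2) > log x` since `ψ` is monotone
(log-convexity of `Γ`). For the last inequality, the gap `ψ(x + 1/2) - log x` strictly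
decreases under `x ↦ x + 1`, because `ψ(x + 1) = ψ x + 1/x` and `log (1 + 1/x) > 1/(x + 1/2)`
(the first term of the `artanh` series), while convexity gives `ψ(x + 1) ≥ log x`, so that the
gap tends to `0` along `x + n`. Hence the gap is positive.
-/

open Real Set Filter Topology

namespace Real

noncomputable def digamma (x : ℝ) : ℝ := deriv (log ∘ Gamma) x

lemma differentiableAt_log_Gamma {x : ℝ} (hx : 0 < x) : DifferentiableAt ℝ (log ∘ Gamma) x := by
  have hpole : ∀ m : ℕ, x ≠ -m := fun m ↦ by linarith [(Nat.cast_nonneg m : (0 : ℝ) ≤ m)]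
  exact (differentiableAt_Gamma hpole).log (Gamma_pos_of_pos hx).ne'

lemma log_Gamma_add_one {x : ℝ} (hx : 0 < x) : log (Gamma (x + 1)) = log (Gamma x) + log x := by
  rw [Gamma_add_one hx.ne', log_mul hx.ne' (Gamma_pos_of_pos hx).ne', add_comm]

lemma digamma_add_one {x : ℝ} (hx : 0 < x) : digamma (x + 1) = digamma x + x⁻¹ := by
  rw [digamma, ← deriv_comp_add_const, digamma, ← deriv_log,
    ← deriv_add (differentiableAt_log_Gamma hx) (differentiableAt_log hx.ne')]
  refine EventuallyEq.deriv_eq ?_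
  filter_upwards [eventually_gt_nhds hx] with t ht using log_Gamma_add_one ht

lemma monotoneOn_digamma : MonotoneOn digamma (Ioi 0) :=
  convexOn_log_Gamma.monotoneOn_deriv fun _ hx ↦ differentiableAt_log_Gamma hx

lemma log_le_digamma_add_one {x : ℝ} (hx : 0 < x) : log x ≤ digamma (x + 1) := by
  have hslope := convexOn_log_Gamma.slope_le_deriv (mem_Ioi.mpr hx)
    (mem_Ioi.mpr (by linarith : 0 < x + 1)) (by linarith) (differentiableAt_log_Gamma (by linarith))
  rwa [slope_def_field, add_sub_cancel_left, div_one, Function.comp_apply, Function.comp_apply,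
    log_Gamma_add_one hx, add_sub_cancel_left] at hslope

lemma inv_add_half_lt_log_add_one_sub_log {x : ℝ} (hx : 0 < x) :
    (x + 1 / 2)⁻¹ < log (x + 1) - log x := by
  have hsum := sum_le_hasSum (Finset.range 2) (fun _ _ ↦ by positivity) (hasSum_log_one_add_inv hx)
  have hlog : log (1 + x⁻¹) = log (x + 1) - log x := by
    rw [← log_div (by positivity) hx.ne']
    congr 1
    field_simp
  have hcube : 0 < ((2 * x + 1) ^ 3)⁻¹ := by positivity
  have hfirst : (x + 1 / 2)⁻¹ = 2 * (2 * x + 1)⁻¹ := by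
    field_simp
  norm_num [Finset.sum_range_succ] at hsum
  rw [← hlog, hfirst]
  linarith

lemma digamma_add_half_sub_log_add_one_lt {x : ℝ} (hx : 0 < x) :
    digamma (x + 1 + 1 / 2) - log (x + 1) < digamma (x + 1 / 2) - log x := by
  have hstep := digamma_add_one (x := x + 1 / 2) (by linarith)
  rw [add_right_comm] at hstep
  linarith [inv_add_half_lt_log_add_one_sub_log hx]

lemma neg_inv_le_digamma_add_half_sub_log {x : ℝ} (hx : 1 / 2 < x) :
    -(2 * x - 1)⁻¹ ≤ digamma (x + 1 / 2) - log x := by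
  have hψ := log_le_digamma_add_one (x := x - 1 / 2) (by linarith)
  rw [show x - 1 / 2 + 1 = x + 1 / 2 by ring] at hψ
  have hlog := log_le_sub_one_of_pos (x := x / (x - 1 / 2)) (by bound)
  rw [log_div (by linarith) (by linarith)] at hlog
  have hbound : x / (x - 1 / 2) - 1 = (2 * x - 1)⁻¹ := by
    have h2 : x - 1 / 2 ≠ 0 := by linarith
    rw [div_sub_one h2, ← one_div, div_eq_div_iff h2 (by linarith)]
    ring
  linarith

lemma digamma_add_half_sub_log_nonneg {x : ℝ} (hx : 0 < x) : 0 ≤ digamma (x + 1 / 2) - log x := by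
  set gap : ℕ → ℝ := fun n ↦ digamma (x + n + 1 / 2) - log (x + n)
  have hanti : Antitone gap := antitone_nat_of_succ_le fun n ↦ by
    have hstep := digamma_add_half_sub_log_add_one_lt (x := x + n) (by positivity)
    simp only [gap, Nat.cast_succ, ← add_assoc]
    exact hstep.le
  have hlim : Tendsto (fun n : ℕ ↦ -(2 * (x + n) - 1)⁻¹) atTop (𝓝 0) := by
    have h : Tendsto (fun n : ℕ ↦ 2 * (x + n) - 1) atTop atTop :=
      tendsto_atTop_add_const_right _ (-1)
        ((tendsto_atTop_add_const_left _ x tendsto_natCast_atTop_atTop).const_mul_atTop two_pos)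
    simpa using (tendsto_inv_atTop_zero.comp h).neg
  refine le_of_tendsto hlim ?_
  filter_upwards [eventually_ge_atTop 1] with n hn
  have hn' : (1 : ℝ) ≤ n := by exact_mod_cast hn
  calc -(2 * (x + n) - 1)⁻¹ ≤ gap n := neg_inv_le_digamma_add_half_sub_log (by linarith)
    _ ≤ gap 0 := hanti (Nat.zero_le n)
    _ = digamma (x + 1 / 2) - log x := by simp [gap]

lemma log_lt_digamma_add_half {x : ℝ} (hx : 0 < x) : log x < digamma (x + 1 / 2) := by
  linarith [digamma_add_half_sub_log_nonneg (x := x + 1) (by linarith),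
    digamma_add_half_sub_log_add_one_lt hx]

end Real

section

variable {α β : ℝ}

lemma hasDerivAt_mul_log_sub_sub_log_Gamma (hβ : 0 < β) {x : ℝ} (hx : 0 < x) :
    HasDerivAt (fun x ↦ (x + β - α) * log x - x - log (Gamma (x + β)))
      (log x + (β - α) / x - digamma (x + β)) x := by
  have hlin : HasDerivAt (fun x : ℝ ↦ x + β - α) 1 x :=
    ((hasDerivAt_id x).add_const β).sub_const α
  have hΓ : HasDerivAt (fun x ↦ log (Gamma (x + β))) (digamma (x + β)) x :=
    (differentiableAt_log_Gamma (by linarith)).hasDerivAt.comp_add_const x β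
  refine (((hlin.mul (hasDerivAt_log hx.ne')).sub (hasDerivAt_id' x)).sub hΓ).congr_deriv ?_
  field_simp
  ring

lemma strictAntiOn_mul_log_sub_sub_log_Gamma (hβ : 1 / 2 ≤ β) (hαβ : β ≤ α) :
    StrictAntiOn (fun x ↦ (x + β - α) * log x - x - log (Gamma (x + β))) (Ioi 0) := by
  have hderiv {x : ℝ} (hx : 0 < x) :=
    hasDerivAt_mul_log_sub_sub_log_Gamma (α := α) (by linarith : 0 < β) hx
  refine strictAntiOn_of_deriv_neg (convex_Ioi 0)
    (fun x hx ↦ (hderiv hx).continuousAt.continuousWithinAt) fun x hx ↦ ?_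
  rw [interior_Ioi, mem_Ioi] at hx
  rw [(hderiv hx).deriv]
  have hψ : log x < digamma (x + β) := (log_lt_digamma_add_half hx).trans_le <|
    monotoneOn_digamma (by simp; linarith) (by simp; linarith) (by linarith)
  have hαx : (β - α) / x ≤ 0 := div_nonpos_of_nonpos_of_nonneg (by linarith) hx.le
  linarith

end

theorem stmt_13 (α β : ℝ) (hβ : 1 / 2 ≤ β) (hαβ : β ≤ α) :
    StrictAntiOn
      (fun x : ℝ => x ^ (x + β - α) / (Real.exp x * Real.Gamma (x + β))) (Set.Ioi 0) ∧
    ∀ x y : ℝ, 0 < x → x < y →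
      Real.exp x * Real.Gamma (x + β) / x ^ (x + β - α)
        < Real.exp y * Real.Gamma (y + β) / y ^ (y + β - α) := by
  have hΓ (x : ℝ) (hx : 0 < x) : 0 < Gamma (x + β) := Gamma_pos_of_pos (by linarith)
  have hexp : EqOn (exp ∘ fun x ↦ (x + β - α) * log x - x - log (Gamma (x + β)))
      (fun x ↦ x ^ (x + β - α) / (exp x * Gamma (x + β))) (Ioi 0) := fun x hx ↦ by
    simp only [Function.comp_apply, exp_sub, exp_log (hΓ x hx), rpow_def_of_pos hx, mul_comm,
      div_div]
  have hf := (exp_strictMono.comp_strictAntiOn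
    (strictAntiOn_mul_log_sub_sub_log_Gamma hβ hαβ)).congr hexp
  refine ⟨hf, fun x y hx hxy ↦ ?_⟩
  have hy : 0 < y := hx.trans hxy
  have hpos (z : ℝ) (hz : 0 < z) : 0 < z ^ (z + β - α) / (exp z * Gamma (z + β)) := by
    have := hΓ z hz
    positivity
  simpa only [inv_div] using (inv_lt_inv₀ (hpos x hx) (hpos y hy)).2 (hf hx hy hxy)
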